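/- Let d ≥ 2 be an integer and let B₀⁺, B₀⁻ be the d×d matrices defined from ω_d = e^{2πi/d} and ω_{2d} = e^{πi/d} as B₀^± = diag((−1)^{j−1})_{j=1}^{d} · ( x^±(k)^{j−1} )_{j,k=1}^{d} · diag( y^±(k) )_{k=1}^{d}, where x⁺(1) = x⁻(1) = y⁺(1) = y⁻(1) = 1, x⁺(2j) = ω_d^{−j}, x⁺(2j+1) = ω_d^{j}, x⁻(2j) = ω_d^{j}, x⁻(2j+1) = ω_d^{−j}, y⁺(2j) = ω_{2d}^{−j}, y⁺(2j+1) = ω_{2d}^{j}, y⁻(2j) = ω_{2d}^{j}, y⁻(2j+1) = ω_{2d}^{−j}. Set B₁⁻ = diag( ω_{2d}^{−(2k−1)} )_{k=1}^{d} · B₀⁻. Then B₁⁻ = B₀⁺ · N, where N = diag(σ₁, …, σ₁) (d/2 blocks σ₁) if d is even, and N = diag(σ₁, …, σ₁, −1) ((d−1)/2 blocks σ₁ followed by a diagonal entry −1) if d is odd. -/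

import Mathlib

/-!
Since `x^± = (y^±)²`, the `(i, k)` entry of `B₀^±` is `(-1)^i y^±(k)^(2i+1)`, an odd function
of `y^±(k)`, and left multiplication by `diag(ω_{2d}^{-(2i+1)})` turns `B₀⁻` into the same
expression in `y⁻(k) / ω_{2d}`. Dividing by `ω_{2d}` maps `y⁻(2j+1) ↦ y⁺(2j+2)` and
`y⁻(2j+2) ↦ y⁺(2j+1)`, which is the column swap performed by `N`; for odd `d` the last value
`y⁻(d) / ω_{2d}` equals `-y⁺(d)` because `ω_{2d}^d = -1`, which produces the entry `-1`.
-/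

open Matrix

/-- `ω_d = e^{2πi/d}`. -/
noncomputable def omd (d : ℕ) : ℂ := Complex.exp (2 * Real.pi * Complex.I / (d : ℂ))

/-- `ω_{2d} = e^{πi/d}`. -/
noncomputable def om2d (d : ℕ) : ℂ := Complex.exp (Real.pi * Complex.I / (d : ℂ))

/-- `x⁺(1) = 1`, `x⁺(2j) = ω_d^{-j}`, `x⁺(2j+1) = ω_d^j` (1-based argument). -/
noncomputable def xp (d : ℕ) (k : ℕ) : ℂ :=
  if k % 2 = 0 then (omd d ^ (k / 2))⁻¹ else omd d ^ (k / 2)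

/-- `x⁻(1) = 1`, `x⁻(2j) = ω_d^{j}`, `x⁻(2j+1) = ω_d^{-j}`. -/
noncomputable def xm (d : ℕ) (k : ℕ) : ℂ :=
  if k % 2 = 0 then omd d ^ (k / 2) else (omd d ^ (k / 2))⁻¹

/-- `y⁺(1) = 1`, `y⁺(2j) = ω_{2d}^{-j}`, `y⁺(2j+1) = ω_{2d}^j`. -/
noncomputable def yp (d : ℕ) (k : ℕ) : ℂ :=
  if k % 2 = 0 then (om2d d ^ (k / 2))⁻¹ else om2d d ^ (k / 2)

/-- `y⁻(1) = 1`, `y⁻(2j) = ω_{2d}^{j}`, `y⁻(2j+1) = ω_{2d}^{-j}`. -/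
noncomputable def ym (d : ℕ) (k : ℕ) : ℂ :=
  if k % 2 = 0 then om2d d ^ (k / 2) else (om2d d ^ (k / 2))⁻¹

/-- `B₀⁺ = diag((-1)^{j-1}) · VDM(x⁺) · diag(y⁺)`. -/
noncomputable def B0p (d : ℕ) : Matrix (Fin d) (Fin d) ℂ :=
  Matrix.of fun i j => (-1 : ℂ) ^ (i : ℕ) * xp d ((j : ℕ) + 1) ^ (i : ℕ) * yp d ((j : ℕ) + 1)

/-- `B₀⁻ = diag((-1)^{j-1}) · VDM(x⁻) · diag(y⁻)`. -/
noncomputable def B0m (d : ℕ) : Matrix (Fin d) (Fin d) ℂ :=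
  Matrix.of fun i j => (-1 : ℂ) ^ (i : ℕ) * xm d ((j : ℕ) + 1) ^ (i : ℕ) * ym d ((j : ℕ) + 1)

/-- `B₁⁻ = diag(ω_{2d}^{-(2k-1)})_{k=1}^{d} · B₀⁻`. -/
noncomputable def B1m (d : ℕ) : Matrix (Fin d) (Fin d) ℂ :=
  Matrix.of fun i j => (om2d d ^ (2 * (i : ℕ) + 1))⁻¹ * B0m d i j

/-- `N = diag(σ₁, …, σ₁)` if `d` is even, `diag(σ₁, …, σ₁, -1)` if `d` is odd. -/
noncomputable def Nmat (d : ℕ) : Matrix (Fin d) (Fin d) ℂ :=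
  Matrix.of fun i j =>
    if (i : ℕ) % 2 = 0 ∧ (j : ℕ) = (i : ℕ) + 1 then (1 : ℂ)
    else if (j : ℕ) % 2 = 0 ∧ (i : ℕ) = (j : ℕ) + 1 then 1
    else if i = j ∧ (i : ℕ) = d - 1 ∧ d % 2 = 1 then -1
    else 0

lemma omd_eq_om2d_sq (d : ℕ) : omd d = om2d d ^ 2 := by
  rw [omd, om2d, ← Complex.exp_nat_mul]
  congr 1
  push_cast
  ring

lemma om2d_ne_zero (d : ℕ) : om2d d ≠ 0 := Complex.exp_ne_zero _

lemma om2d_pow_self {d : ℕ} (hd : d ≠ 0) : om2d d ^ d = -1 := by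
  rw [om2d, ← Complex.exp_nat_mul, mul_div_cancel₀ _ (Nat.cast_ne_zero.mpr hd)]
  exact Complex.exp_pi_mul_I

lemma xp_eq_yp_sq (d k : ℕ) : xp d k = yp d k ^ 2 := by
  unfold xp yp
  split_ifs <;> rw [omd_eq_om2d_sq] <;> ring

lemma xm_eq_ym_sq (d k : ℕ) : xm d k = ym d k ^ 2 := by
  unfold xm ym
  split_ifs <;> rw [omd_eq_om2d_sq] <;> ring

lemma B0p_apply {d : ℕ} (i j : Fin d) :
    B0p d i j = (-1) ^ (i : ℕ) * yp d (j + 1) ^ (2 * (i : ℕ) + 1) := by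
  rw [B0p, of_apply, xp_eq_yp_sq]
  ring

lemma B1m_apply {d : ℕ} (i j : Fin d) :
    B1m d i j = (-1) ^ (i : ℕ) * (ym d (j + 1) / om2d d) ^ (2 * (i : ℕ) + 1) := by
  rw [B1m, of_apply, B0m, of_apply, xm_eq_ym_sq]
  ring

lemma yp_odd (d t : ℕ) : yp d (2 * t + 1) = om2d d ^ t := by
  rw [yp, if_neg (by omega), Nat.mul_add_div two_pos, Nat.div_eq_of_lt one_lt_two, add_zero]

lemma yp_even_succ (d t : ℕ) : yp d (2 * t + 2) = (om2d d ^ (t + 1))⁻¹ := by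
  rw [yp, if_pos (by omega), show 2 * t + 2 = 2 * (t + 1) by ring,
    Nat.mul_div_cancel_left _ two_pos]

lemma ym_odd_div_om2d (d t : ℕ) : ym d (2 * t + 1) / om2d d = yp d (2 * t + 2) := by
  rw [ym, if_neg (by omega), Nat.mul_add_div two_pos, Nat.div_eq_of_lt one_lt_two, add_zero,
    yp_even_succ]
  ring

lemma ym_even_succ_div_om2d (d t : ℕ) : ym d (2 * t + 2) / om2d d = yp d (2 * t + 1) := by
  rw [ym, if_pos (by omega), show 2 * t + 2 = 2 * (t + 1) by ring,
    Nat.mul_div_cancel_left _ two_pos, yp_odd, pow_succ, mul_div_cancel_right₀ _ (om2d_ne_zero d)]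

lemma ym_last_div_om2d {d t : ℕ} (hd : d = 2 * t + 1) :
    ym d (2 * t + 1) / om2d d = -yp d (2 * t + 1) := by
  have hpow : om2d d ^ (2 * t + 1) = -1 := hd ▸ om2d_pow_self (by omega)
  rw [ym_odd_div_om2d, yp_even_succ, yp_odd, inv_eq_of_mul_eq_one_right]
  linear_combination (-1 : ℂ) * hpow

lemma mul_apply_of_col_eq_ite {R n : Type*} [Fintype n] [DecidableEq n]
    [NonUnitalNonAssocSemiring R] {A N : Matrix n n R} {i j k : n} {c : R}
    (hN : ∀ l, N l j = if l = k then c else 0) :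
    (A * N) i j = A i k * c := by
  simp only [mul_apply, hN, mul_ite, mul_zero, Finset.sum_ite_eq', Finset.mem_univ, if_true]

section Nmat

variable {d : ℕ} {j : Fin d} {t : ℕ}

lemma Nmat_apply_even (hj : (j : ℕ) = 2 * t) (ht : 2 * t + 1 < d) (l : Fin d) :
    Nmat d l j = if l = ⟨2 * t + 1, ht⟩ then 1 else 0 := by
  simp only [Nmat, of_apply, Fin.ext_iff]
  split_ifs <;> first | rfl | omega

lemma Nmat_apply_odd (hj : (j : ℕ) = 2 * t + 1) (l : Fin d) :
    Nmat d l j = if l = ⟨2 * t, by omega⟩ then 1 else 0 := by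
  simp only [Nmat, of_apply, Fin.ext_iff]
  split_ifs <;> first | rfl | omega

lemma Nmat_apply_last (hj : (j : ℕ) = 2 * t) (hd : d = 2 * t + 1) (l : Fin d) :
    Nmat d l j = if l = j then -1 else 0 := by
  simp only [Nmat, of_apply, Fin.ext_iff]
  split_ifs <;> first | rfl | omega

end Nmat

theorem stmt11_general (d : ℕ) : B1m d = B0p d * Nmat d := by
  ext i j
  obtain ⟨t, hj | hj⟩ := Nat.even_or_odd' (j : ℕ)
  · by_cases ht : 2 * t + 1 < d
    · rw [mul_apply_of_col_eq_ite (Nmat_apply_even hj ht), B1m_apply, B0p_apply, hj,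
        ym_odd_div_om2d, mul_one]
    · have hd : d = 2 * t + 1 := by omega
      rw [mul_apply_of_col_eq_ite (Nmat_apply_last hj hd), B1m_apply, B0p_apply, hj,
        ym_last_div_om2d hd, Odd.neg_pow (odd_two_mul_add_one _)]
      ring
  · rw [mul_apply_of_col_eq_ite (Nmat_apply_odd hj), B1m_apply, B0p_apply, hj,
      ym_even_succ_div_om2d, mul_one]

/-- `B₁⁻ = B₀⁺ · N`. -/
theorem stmt11 (d : ℕ) (hd : 2 ≤ d) : B1m d = B0p d * Nmat d :=
  stmt11_general d
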